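/- The model graph G is a connected graph. -/

import Mathlib

/-- Adjacency relation of the Farey graph on `Option ℚ`: `some x` and `some y` are
adjacent iff `|x.num * y.den - y.num * x.den| = 1`, and `none` (representing `∞`)
is adjacent to `some x` iff `x.den = 1`. -/
def fareyAdj : Option ℚ → Option ℚ → Prop
  | some x, some y => |x.num * (y.den : ℤ) - y.num * (x.den : ℤ)| = 1
  | some x, none => x.den = 1
  | none, some x => x.den = 1
  | none, none => False

/-- The Farey graph `𝔽` on the vertex set `Option ℚ`. -/
def fareyGraph : SimpleGraph (Option ℚ) where
  Adj := fareyAdj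
  symm := by
    constructor
    rintro (_ | x) (_ | y) h
    · exact h.elim
    · exact h
    · exact h
    · show |y.num * (x.den : ℤ) - x.num * (y.den : ℤ)| = 1
      rw [abs_sub_comm]
      exact h
  loopless := by
    constructor
    rintro (_ | x) h
    · exact h.elim
    · have : |x.num * (x.den : ℤ) - x.num * (x.den : ℤ)| = 1 := h
      simp at this

/-- A triangle of the Farey graph: a 3-element clique. -/
def FareyTriangle : Type := {s : Finset (Option ℚ) // fareyGraph.IsNClique 3 s}

/-- The Farey dual graph `𝔽*`: vertices are the triangles of the Farey graph, two
triangles being adjacent iff they are distinct and share exactly two vertices. -/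
def fareyDual : SimpleGraph FareyTriangle where
  Adj T T' := T ≠ T' ∧ (T.1 ∩ T'.1).card = 2
  symm := by
    constructor
    rintro T T' ⟨h1, h2⟩
    exact ⟨h1.symm, by rwa [Finset.inter_comm]⟩
  loopless := ⟨fun T h => h.1 rfl⟩

/-- Vertices of the model graph: Farey vertices `.inl x`, dual vertices
`.inr (.inl x)` (written `x̃`), and triangle-vertices `.inr (.inr T)`. -/
abbrev ModelVertex : Type := Option ℚ ⊕ (Option ℚ ⊕ FareyTriangle)

/-- Adjacency relation of the model graph `G`. -/
def modelAdj : ModelVertex → ModelVertex → Prop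
  | .inl x, .inl y => fareyGraph.Adj x y
  | .inl x, .inr (.inl y) => x = y
  | .inr (.inl x), .inl y => x = y
  | .inr (.inl x), .inr (.inr T) => x ∈ T.1
  | .inr (.inr T), .inr (.inl x) => x ∈ T.1
  | .inr (.inr T), .inr (.inr T') => T ≠ T' ∧ (T.1 ∩ T'.1).card = 2
  | _, _ => False

/-- The model graph `G` of the pants graph of `N₃`: on `V(𝔽) ⊔ V(𝔽) ⊔ T(𝔽)`, with
edges `x—y` for `x, y` adjacent in `𝔽`, `x̃—x`, `x̃—T` whenever `x ∈ T`, and `T—T'`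
whenever `T ≠ T'` and `|T ∩ T'| = 2`. -/
def modelGraph : SimpleGraph ModelVertex where
  Adj := modelAdj
  symm := by
    constructor
    rintro (x | x | T) (y | y | T') h
    · exact fareyGraph.symm.symm _ _ h
    · exact h.symm
    · exact h.elim
    · exact h.symm
    · exact h.elim
    · exact h
    · exact h.elim
    · exact h
    · exact ⟨h.1.symm, by
        have := h.2
        rwa [Finset.inter_comm]⟩
  loopless := by
    constructor
    rintro (x | x | T) h
    · exact fareyGraph.loopless.irrefl x h
    · exact h.elim
    · exact h.1 rfl


/- A rational `p/q` with `q ≥ 2` has a Farey neighbour `b/a` with `0 < a < q`: take `a ≡ p⁻¹ (mod q)`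
in `[0, q)`; it is nonzero because `q ∤ 1`. Descending along such neighbours reaches an integer,
which is adjacent to `∞`. In `G`, every `x̃` hangs off `x`, and every triangle off the `x̃` of its vertices. -/

open SimpleGraph

lemma exists_fareyGraph_adj_den_lt (x : ℚ) (hx : 1 < x.den) :
    ∃ y : ℚ, y.den < x.den ∧ fareyGraph.Adj (some x) (some y) := by
  obtain ⟨u, v, huv⟩ : IsCoprime x.num (x.den : ℤ) := Int.isCoprime_iff_gcd_eq_one.mpr x.reduced
  set q : ℤ := (x.den : ℤ)
  have hq1 : 1 < q := by omega
  set a := u % q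
  set b := -v - x.num * (u / q)
  have hdet : x.num * a - b * q = 1 := by
    linear_combination huv + x.num * Int.mul_ediv_add_emod u q
  have ha : 0 < a := by
    refine lt_of_le_of_ne (Int.emod_nonneg u (by omega)) fun h0 => ?_
    have : q ∣ 1 := ⟨-b, by rw [← hdet, ← h0]; ring⟩
    have := Int.le_of_dvd one_pos this
    omega
  have hcop : Nat.Coprime b.natAbs a.natAbs :=
    Int.isCoprime_iff_gcd_eq_one.mp ⟨-q, x.num, by linear_combination hdet⟩
  have hden : ((b / a : ℚ).den : ℤ) = a := Rat.den_div_eq_of_coprime ha hcop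
  refine ⟨b / a, ?_, ?_⟩
  · have : a < q := Int.emod_lt_of_pos u (by omega)
    omega
  · show |x.num * ((b / a : ℚ).den : ℤ) - (b / a : ℚ).num * q| = 1
    rw [hden, Rat.num_div_eq_of_coprime ha hcop, hdet, abs_one]

lemma fareyGraph_reachable_none (x : ℚ) : fareyGraph.Reachable (some x) none := by
  by_cases hx : x.den = 1
  · exact Adj.reachable hx
  · obtain ⟨y, hy, hxy⟩ := exists_fareyGraph_adj_den_lt x (by have := x.den_pos; omega)
    exact hxy.reachable.trans (fareyGraph_reachable_none y)
termination_by x.den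

theorem fareyGraph_connected : fareyGraph.Connected :=
  (connected_iff_exists_forall_reachable _).mpr
    ⟨none, fun | none => .rfl | some x => (fareyGraph_reachable_none x).symm⟩

def fareyGraphToModelGraph : fareyGraph →g modelGraph := ⟨Sum.inl, id⟩

lemma FareyTriangle.nonempty (T : FareyTriangle) : T.1.Nonempty := by
  rw [← Finset.card_pos, T.2.card_eq]
  norm_num

/-- The model graph `G` is connected. -/
theorem modelGraph_connected : modelGraph.Connected := by
  have farey (x y : Option ℚ) : modelGraph.Reachable (.inl x) (.inl y) :=
    (fareyGraph_connected.preconnected x y).map fareyGraphToModelGraph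
  have dual (x : Option ℚ) : modelGraph.Reachable (.inr (.inl x)) (.inl x) :=
    Adj.reachable (G := modelGraph) rfl
  refine (connected_iff_exists_forall_reachable _).mpr ⟨.inl none, ?_⟩
  rintro (x | x | T)
  · exact farey none x
  · exact (farey none x).trans (dual x).symm
  · obtain ⟨x, hx⟩ := T.nonempty
    have hTx : modelGraph.Adj (.inr (.inl x)) (.inr (.inr T)) := hx
    exact ((farey none x).trans (dual x).symm).trans hTx.reachable
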